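/- For every k ≥ 1 and all p, q ∈ D(k) with p ≠ q, the loop distance d(p,q) equals the minimal l ≥ 1 for which there exists a sequence p = p₀, p₁, …, p_l = q in D(k) with d(p_{i−1}, p_i) = 1 for every 1 ≤ i ≤ l (equivalently, with p_{i−1} and p_i having all strings identical except two of them). -/

import Mathlib

open scoped BigOperators

/-- Non-crossing pair partitions of {1,…,2k}: fixed-point-free non-crossing
involutions of `Fin (2*k)`. -/
def NCPair (k : ℕ) : Type :=
  {p : Equiv.Perm (Fin (2 * k)) //
    (∀ x, p (p x) = x) ∧ (∀ x, p x ≠ x) ∧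
    ∀ a b c d : Fin (2 * k), a < b → b < c → c < d → p a = c → p b = d → False}

instance (k : ℕ) : Fintype (NCPair k) := by unfold NCPair; infer_instance

instance (k : ℕ) : DecidableEq (NCPair k) := by unfold NCPair; infer_instance

/-- `loops p q`: the number of loops obtained by closing the composed diagram,
i.e. the number of orbits of the subgroup generated by `p` and `q` on `Fin (2*k)`. -/
noncomputable def loops {k : ℕ} (p q : NCPair k) : ℕ :=
  Nat.card (MulAction.orbitRel.Quotient
    (↥(Subgroup.closure ({p.1, q.1} : Set (Equiv.Perm (Fin (2 * k)))))) (Fin (2 * k)))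

/-- The Gram matrix `G_{kn}(p,q) = n^{l(p,q)}`. -/
noncomputable def Gram (k n : ℕ) : Matrix (NCPair k) (NCPair k) ℝ :=
  fun p q => (n : ℝ) ^ loops p q

/-- The loop distance `d(p,q) = k - l(p,q)`. -/
noncomputable def loopDist {k : ℕ} (p q : NCPair k) : ℕ := k - loops p q

/-!
The loops of `p` and `q` are the orbits of `⟨p, q⟩`, so `l(p, q)` is the dimension of the space
`I(p, q)` of functions invariant under `p` and `q`, and `I(p, p)` has dimension `k`. Since
`I(p, r) + I(r, q) ⊆ I(r, r)` and `I(p, r) ∩ I(r, q) ⊆ I(p, q)`, we get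
`d(p, q) ≤ d(p, r) + d(r, q)`, which bounds the length of every chain from below.

Conversely, if `p ≠ q`, let `{a, b}` be an innermost string of `q` missing from `p`; then `p = q`
strictly between `a` and `b`, and replacing the strings `{a, p a}`, `{b, p b}` of `p` by `{a, b}`,
`{p a, p b}` gives a non-crossing `r`. The `p`-invariant functions with `f a = f b` are
`r`-invariant, so `d(p, r) = 1`; and `I(p, q) ⊊ I(r, q)`, the indicator of `[a, b]` lying in the
difference, so `d(r, q) < d(p, q)`.
-/

open Function Set Module MulAction

theorem Submodule.finrank_le_finrank_inf_ker_add_one {K V : Type*} [Field K] [AddCommGroup V]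
    [Module K V] [FiniteDimensional K V] (W : Submodule K V) (φ : V →ₗ[K] K) :
    finrank K W ≤ finrank K ↥(W ⊓ LinearMap.ker φ) + 1 := by
  have hsup := Submodule.finrank_sup_add_finrank_inf_eq W (LinearMap.ker φ)
  have hrank := LinearMap.finrank_range_add_finrank_ker φ
  have hrange : finrank K (LinearMap.range φ) ≤ 1 := (Submodule.finrank_le _).trans (by simp)
  have := Submodule.finrank_le (W ⊔ LinearMap.ker φ)
  omega

namespace Equiv.Perm

variable {α : Type*} (K : Type*) [Field K]

def invariantFunctions (S : Set (Perm α)) : Submodule K (α → K) where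
  carrier := {f | ∀ σ ∈ S, ∀ x, f (σ x) = f x}
  add_mem' hf hg σ hσ x := by simp [hf σ hσ x, hg σ hσ x]
  zero_mem' _ _ _ := rfl
  smul_mem' c f hf σ hσ x := by simp [hf σ hσ x]

variable {K}

theorem mem_invariantFunctions {S : Set (Perm α)} {f : α → K} :
    f ∈ invariantFunctions K S ↔ ∀ σ ∈ S, ∀ x, f (σ x) = f x := Iff.rfl

theorem apply_eq_of_mem_closure {β : Type*} {S : Set (Perm α)} {f : α → β}
    (hf : ∀ σ ∈ S, ∀ x, f (σ x) = f x) {g : Perm α} (hg : g ∈ Subgroup.closure S) (x : α) :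
    f (g x) = f x := by
  induction hg using Subgroup.closure_induction generalizing x with
  | mem σ hσ => exact hf σ hσ x
  | one => rfl
  | mul σ τ _ _ hσ hτ => rw [mul_apply, hσ, hτ]
  | inv σ _ hσ => rw [← hσ (σ⁻¹ x)]; simp

theorem invariantFunctions_anti {S T : Set (Perm α)} (h : S ⊆ T) :
    invariantFunctions K T ≤ invariantFunctions K S :=
  fun _ hf σ hσ => hf σ (h hσ)

theorem invariantFunctions_union (S T : Set (Perm α)) :
    invariantFunctions K (S ∪ T) = invariantFunctions K S ⊓ invariantFunctions K T := by
  ext f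
  simp only [Submodule.mem_inf, mem_invariantFunctions, Set.mem_union, or_imp, forall_and]

theorem indicator_mem_invariantFunctions_iff {S : Set (Perm α)} {T : Set α} :
    T.indicator 1 ∈ invariantFunctions K S ↔ ∀ σ ∈ S, ∀ x, σ x ∈ T ↔ x ∈ T := by
  simp only [mem_invariantFunctions]
  refine forall₂_congr fun σ _ => forall_congr' fun x => ?_
  by_cases h₁ : σ x ∈ T <;> by_cases h₂ : x ∈ T <;> simp [h₁, h₂]

theorem invariantFunctions_pair_lt {σ τ : Perm α} (hσ : Involutive σ) (hτ : ∀ x, τ x ≠ x)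
    (h : σ ≠ τ) : invariantFunctions K {σ, τ} < invariantFunctions K {σ} := by
  obtain ⟨x, hx⟩ := DFunLike.ne_iff.mp h
  refine SetLike.lt_iff_le_and_exists.mpr ⟨invariantFunctions_anti (by simp),
    ({x, σ x} : Set α).indicator 1, ?_, ?_⟩ <;> rw [indicator_mem_invariantFunctions_iff]
  · rintro _ rfl y
    simp only [mem_insert_iff, mem_singleton_iff, hσ.eq_iff, hσ x]
    tauto
  · intro H
    have := (H τ (by simp) x).mpr (by simp)
    simp only [mem_insert_iff, mem_singleton_iff] at this
    tauto

theorem finrank_invariantFunctions [Fintype α] (S : Set (Perm α)) :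
    finrank K (invariantFunctions K S) =
      Nat.card (orbitRel.Quotient (Subgroup.closure S) α) := by
  classical
  let π : α → orbitRel.Quotient (Subgroup.closure S) α := Quotient.mk _
  have hrange : LinearMap.range (LinearMap.funLeft K K π) = invariantFunctions K S := by
    ext f
    constructor
    · rintro ⟨g, rfl⟩ σ hσ x
      exact congrArg g (Quotient.sound ⟨⟨σ, Subgroup.subset_closure hσ⟩, rfl⟩)
    · intro hf
      refine ⟨Quotient.lift f ?_, rfl⟩
      rintro _ y ⟨g, rfl⟩
      exact apply_eq_of_mem_closure hf g.2 y
  rw [← hrange, LinearMap.finrank_range_of_inj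
      (LinearMap.funLeft_injective_of_surjective _ _ _ Quotient.mk_surjective),
    Module.finrank_fintype_fun_eq_card, Nat.card_eq_fintype_card]

theorem finrank_add_finrank_le [Fintype α] (S T : Set (Perm α)) :
    finrank K (invariantFunctions K S) + finrank K (invariantFunctions K T) ≤
      finrank K (invariantFunctions K (S ∪ T)) + finrank K (invariantFunctions K (S ∩ T)) := by
  rw [invariantFunctions_union, ← Submodule.finrank_sup_add_finrank_inf_eq, add_comm]
  gcongr
  exact Submodule.finrank_mono <| sup_le (invariantFunctions_anti Set.inter_subset_left)
    (invariantFunctions_anti Set.inter_subset_right)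

theorem mem_orbit_closure_singleton_iff {σ : Perm α} (hσ : Involutive σ) {x y : α} :
    y ∈ orbit (Subgroup.closure {σ}) x ↔ y = x ∨ y = σ x := by
  constructor
  · rintro ⟨g, rfl⟩
    have hT : ∀ τ ∈ ({σ} : Set (Perm α)), ∀ z, (τ z = x ∨ τ z = σ x) = (z = x ∨ z = σ x) := by
      rintro τ rfl z
      rw [hσ.eq_iff, hσ.eq_iff, hσ x, or_comm]
    simpa [Subgroup.smul_def] using apply_eq_of_mem_closure (f := fun z => z = x ∨ z = σ x) hT g.2 x
  · rintro (rfl | rfl)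
    · exact mem_orbit_self y
    · exact ⟨⟨σ, Subgroup.subset_closure rfl⟩, rfl⟩

theorem card_eq_two_mul_finrank_invariantFunctions [Fintype α] {σ : Perm α}
    (hσ : Involutive σ) (hfix : ∀ x, σ x ≠ x) :
    Fintype.card α = 2 * finrank K (invariantFunctions K {σ}) := by
  classical
  rw [finrank_invariantFunctions, Nat.card_eq_fintype_card, ← Finset.card_univ,
    Finset.card_eq_sum_card_fiberwise
      (f := Quotient.mk (orbitRel (Subgroup.closure {σ}) α)) (t := Finset.univ) (by simp),
    Finset.sum_const_nat (m := 2), Finset.card_univ, mul_comm]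
  rintro ω -
  obtain ⟨x, rfl⟩ := Quotient.mk_surjective ω
  have hfiber : ({y | Quotient.mk (orbitRel (Subgroup.closure {σ}) α) y = Quotient.mk _ x} :
      Finset α) = {x, σ x} := by
    ext y
    simp [Quotient.eq, orbitRel_apply, mem_orbit_closure_singleton_iff hσ]
  rw [hfiber, Finset.card_pair (hfix x).symm]

section Rewire

variable [DecidableEq α] {p : Perm α} {a b : α}

/-- Conjugating by the transposition of `p a` and `b` replaces the strings `{a, p a}`, `{b, p b}`
of `p` by `{a, b}`, `{p a, p b}`. -/
def rewire (p : Perm α) (a b : α) : Perm α := swap (p a) b * p * swap (p a) b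

theorem rewire_involutive (hp : Involutive p) : Involutive (rewire p a b) := by
  intro x
  simp [rewire, hp _]

theorem rewire_apply_ne (hfix : ∀ x, p x ≠ x) (x : α) : rewire p a b x ≠ x := by
  intro h
  apply hfix (swap (p a) b x)
  simpa [rewire, swap_apply_eq_iff] using h

theorem apply_rewire_eq {β : Type*} {f : α → β} (hf : ∀ x, f (p x) = f x) (hab : f a = f b)
    (x : α) : f (rewire p a b x) = f x := by
  have hswap : ∀ y, f (swap (p a) b y) = f y := by
    intro y
    rcases eq_or_ne y (p a) with rfl | h₁
    · rw [swap_apply_left, hf, hab]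
    rcases eq_or_ne y b with rfl | h₂
    · rw [swap_apply_right, hf, hab]
    · rw [swap_apply_of_ne_of_ne h₁ h₂]
  simp only [rewire, mul_apply, hswap, hf]

theorem rewire_apply_left (ha : p a ≠ a) (hab : a ≠ b) : rewire p a b a = b := by
  simp [rewire, swap_apply_of_ne_of_ne ha.symm hab]

theorem rewire_apply_right (hp : Involutive p) (ha : p a ≠ a) (hab : a ≠ b) :
    rewire p a b b = a := by
  simp [rewire, swap_apply_of_ne_of_ne ha.symm hab, hp a]

theorem rewire_apply_apply_left (hb : p b ≠ b) (hab : a ≠ b) : rewire p a b (p a) = p b := by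
  simp [rewire, swap_apply_of_ne_of_ne (p.injective.ne hab.symm) hb]

theorem rewire_apply_apply_right (hp : Involutive p) (hb : p b ≠ b) (hab : a ≠ b) :
    rewire p a b (p b) = p a := by
  simp [rewire, swap_apply_of_ne_of_ne (p.injective.ne hab.symm) hb, hp b]

theorem rewire_apply_of_ne (hp : Involutive p) {x : α} (ha : x ≠ a) (hb : x ≠ b) (hpa : x ≠ p a)
    (hpb : x ≠ p b) : rewire p a b x = p x := by
  rw [rewire, mul_apply, mul_apply, swap_apply_of_ne_of_ne hpa hb,
    swap_apply_of_ne_of_ne (p.injective.ne ha) (fun h => hpb (by rw [← h, hp]))]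

theorem finrank_invariantFunctions_le_rewire [Fintype α] (p : Perm α) (a b : α) :
    finrank K (invariantFunctions K {p}) ≤
      finrank K (invariantFunctions K {p, rewire p a b}) + 1 := by
  have hle : invariantFunctions K {p} ⊓
      LinearMap.ker (LinearMap.proj (R := K) (φ := fun _ : α => K) a - LinearMap.proj b) ≤
      invariantFunctions K {p, rewire p a b} := by
    rintro f ⟨hf, hab⟩ σ (rfl | rfl) x
    · exact hf σ rfl x
    · exact apply_rewire_eq (hf p rfl) (sub_eq_zero.mp hab) x
  exact (Submodule.finrank_le_finrank_inf_ker_add_one _ _).trans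
    (Nat.add_le_add_right (Submodule.finrank_mono hle) 1)

end Rewire

end Equiv.Perm

section Noncrossing

variable {α : Type*} [LinearOrder α]

/-- Whether exactly one of `u`, `v` lies below `z`; for `z ∉ {u, v}`, whether `z` lies strictly
between `u` and `v`. As a xor it telescopes along paths (`sep_xor_sep`). -/
def sep (u v z : α) : Bool := decide (u < z) ^^ decide (v < z)

theorem sep_comm (u v z : α) : sep u v z = sep v u z := Bool.xor_comm _ _

theorem sep_xor_sep (u v w z : α) : (sep u v z ^^ sep v w z) = sep u w z := by
  simp only [sep]
  cases decide (u < z) <;> cases decide (v < z) <;> cases decide (w < z) <;> rfl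

theorem sep_eq_true_iff {u v z : α} (h : u < v) : sep u v z = true ↔ u < z ∧ z ≤ v := by
  have : v < z → u < z := h.trans
  rw [sep, Bool.xor_iff_ne, ne_eq, decide_eq_decide, ← not_lt]
  tauto

theorem sep_eq_sep_comm {u v x y : α} (hux : u ≠ x) (huy : u ≠ y) (hvx : v ≠ x) (hvy : v ≠ y) :
    sep u v x = sep u v y ↔ sep x y u = sep x y v := by
  have hflip : ∀ {s t : α}, s ≠ t → decide (t < s) = !decide (s < t) := by
    intro s t hst
    rcases hst.lt_or_gt with h | h <;> simp [h, h.le, not_lt.mpr]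
  simp only [sep, hflip hux, hflip huy, hflip hvx, hflip hvy]
  cases decide (u < x) <;> cases decide (u < y) <;> cases decide (v < x) <;>
    cases decide (v < y) <;> decide

/-- `f` maps each side of each of its strings `{x, f x}` to itself, i.e. no two strings cross. -/
def Noncrossing (f : α → α) : Prop :=
  ∀ x y, y ≠ x → y ≠ f x → sep x (f x) (f y) = sep x (f x) y

theorem Noncrossing.mapsTo_Ioo {f : α → α} (hf : Noncrossing f) (hinv : Involutive f) {x : α}
    (hx : x < f x) : MapsTo f (Ioo x (f x)) (Ioo x (f x)) := by
  intro z ⟨hxz, hzx⟩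
  have hsep := hf x z hxz.ne' hzx.ne
  rw [Bool.eq_iff_iff, sep_eq_true_iff hx, sep_eq_true_iff hx] at hsep
  obtain ⟨h₁, h₂⟩ := hsep.mpr ⟨hxz, hzx.le⟩
  exact ⟨h₁, h₂.lt_of_ne (hinv.injective.ne hxz.ne')⟩

theorem Noncrossing.not_interleaved {f : α → α} (hf : Noncrossing f) {a b c d : α}
    (hab : a < b) (hbc : b < c) (hcd : c < d) (ha : f a = c) (hb : f b = d) : False := by
  have hsep := hf a b hab.ne' (ha ▸ hbc.ne)
  rw [ha, hb, Bool.eq_iff_iff, sep_eq_true_iff (hab.trans hbc), sep_eq_true_iff (hab.trans hbc)]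
    at hsep
  exact hcd.not_ge (hsep.mpr ⟨hab, hbc.le⟩).2

theorem noncrossing_of_forall_not_interleaved {f : α → α} (hf : Involutive f)
    (h : ∀ a b c d : α, a < b → b < c → c < d → f a = c → f b = d → False) :
    Noncrossing f := by
  have hinside : ∀ {x y}, x < y → y < f x → x < f y ∧ f y < f x := by
    intro x y hxy hyx
    refine ⟨lt_of_not_ge fun hyx' => ?_, lt_of_not_ge fun hxy' => ?_⟩
    · rcases hyx'.lt_or_eq with hlt | heq
      · exact h _ _ _ _ hlt hxy hyx (hf y) rfl
      · exact hyx.ne (by rw [← heq, hf])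
    · rcases hxy'.lt_or_eq with hlt | heq
      · exact h _ _ _ _ hxy hyx hlt rfl rfl
      · exact hxy.ne' (hf.injective heq.symm)
  have hmain : ∀ {x y}, x < f x → y ≠ x → y ≠ f x → sep x (f x) (f y) = sep x (f x) y := by
    intro x y hx hyx hyfx
    rw [Bool.eq_iff_iff, sep_eq_true_iff hx, sep_eq_true_iff hx]
    constructor
    · rintro ⟨h₁, h₂⟩
      have := hinside h₁ (h₂.lt_of_ne (hf.injective.ne hyx))
      rw [hf] at this
      exact ⟨this.1, this.2.le⟩
    · rintro ⟨h₁, h₂⟩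
      have := hinside h₁ (h₂.lt_of_ne hyfx)
      exact ⟨this.1, this.2.le⟩
  intro x y hyx hyfx
  rcases lt_trichotomy x (f x) with hx | hx | hx
  · exact hmain hx hyx hyfx
  · simp [← hx, sep]
  · have := hmain (x := f x) (y := y) (by rwa [hf]) hyfx (by rwa [hf])
    rwa [hf, sep_comm (f x) x, sep_comm (f x) x] at this

end Noncrossing

section Matching

variable {α : Type*} [LinearOrder α]

structure IsNoncrossingMatching (f : α → α) : Prop where
  involutive : Involutive f
  apply_ne : ∀ x, f x ≠ x
  noncrossing : Noncrossing f

structure IsInnermostNewChord (p q : α → α) (a b : α) : Prop where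
  lt : a < b
  apply_left : q a = b
  apply_ne : p a ≠ b
  eqOn : EqOn p q (Ioo a b)

theorem exists_isInnermostNewChord [Finite α] {p q : α → α} (hp : Involutive p)
    (hq : IsNoncrossingMatching q) (hpq : p ≠ q) : ∃ a b, IsInnermostNewChord p q a b := by
  classical
  have : Fintype α := Fintype.ofFinite α
  have hswap : ∀ {x}, p x ≠ q x → p (q x) ≠ x := fun hx h =>
    hx ((congrArg p h).symm.trans (hp _))
  let D : Finset α := {x | p x ≠ q x ∧ x < q x}
  have hD : ∀ x, p x ≠ q x → x ∈ D ∨ q x ∈ D := by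
    intro x hx
    rcases (hq.apply_ne x).lt_or_gt with h | h
    · exact Or.inr (by simp [D, hswap hx, hq.involutive x, h])
    · exact Or.inl (by simp [D, hx, h])
  obtain ⟨x₀, hx₀⟩ := Function.ne_iff.mp hpq
  -- with the least right end, a disagreement inside the chord would give one with a smaller end
  obtain ⟨a, ha, hmin⟩ := D.exists_min_image q <| (hD x₀ hx₀).elim (⟨_, ·⟩) (⟨_, ·⟩)
  simp only [D, Finset.mem_filter, Finset.mem_univ, true_and] at ha
  refine ⟨a, q a, ha.2, rfl, ha.1, fun z hz => by_contra fun hne => ?_⟩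
  have hqz := hq.noncrossing.mapsTo_Ioo hq.involutive ha.2 hz
  rcases hD z hne with h | h
  · exact (hmin z h).not_gt hqz.2
  · exact (hmin _ h).not_gt (by rw [hq.involutive]; exact hz.2)

namespace IsInnermostNewChord

open Equiv Perm

variable {p q : Perm α} {a b : α}

theorem mapsTo_Ioo (h : IsInnermostNewChord p q a b) (hq : IsNoncrossingMatching q) :
    MapsTo p (Ioo a b) (Ioo a b) := by
  intro z hz
  rw [h.eqOn hz]
  have := hq.noncrossing.mapsTo_Ioo hq.involutive (h.apply_left ▸ h.lt)
  rw [h.apply_left] at this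
  exact this hz

theorem apply_left_notMem_Icc (h : IsInnermostNewChord p q a b) (hp : IsNoncrossingMatching p)
    (hq : IsNoncrossingMatching q) : p a ∉ Icc a b := fun ⟨h₁, h₂⟩ =>
  have hin : p a ∈ Ioo a b := ⟨h₁.lt_of_ne (hp.apply_ne a).symm, h₂.lt_of_ne h.apply_ne⟩
  (h.mapsTo_Ioo hq hin).1.ne (hp.involutive a).symm

theorem apply_right (h : IsInnermostNewChord p q a b) (hq : Involutive q) : q b = a := by
  rw [← h.apply_left, hq]

theorem apply_right_ne (h : IsInnermostNewChord p q a b) (hp : Involutive p) : p b ≠ a :=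
  fun hba => h.apply_ne (by rw [← hba, hp])

theorem apply_right_notMem_Icc (h : IsInnermostNewChord p q a b) (hp : IsNoncrossingMatching p)
    (hq : IsNoncrossingMatching q) : p b ∉ Icc a b := fun ⟨h₁, h₂⟩ =>
  have hin : p b ∈ Ioo a b :=
    ⟨h₁.lt_of_ne (h.apply_right_ne hp.involutive).symm, h₂.lt_of_ne (hp.apply_ne b)⟩
  (h.mapsTo_Ioo hq hin).2.ne (hp.involutive b)

theorem sep_apply (h : IsInnermostNewChord p q a b) (hp : IsNoncrossingMatching p)
    (hq : IsNoncrossingMatching q) {z : α} (hzb : z ≠ b) (hzpb : z ≠ p b) :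
    sep a b (p z) = sep a b z := by
  have hpzb : p z ≠ b := fun hz => hzpb (by rw [← hz, hp.involutive])
  rw [Bool.eq_iff_iff, sep_eq_true_iff h.lt, sep_eq_true_iff h.lt]
  constructor
  · rintro ⟨h₁, h₂⟩
    have := h.mapsTo_Ioo hq ⟨h₁, h₂.lt_of_ne hpzb⟩
    rw [hp.involutive] at this
    exact ⟨this.1, this.2.le⟩
  · rintro ⟨h₁, h₂⟩
    have := h.mapsTo_Ioo hq ⟨h₁, h₂.lt_of_ne hzb⟩
    exact ⟨this.1, this.2.le⟩

theorem sep_eq_false_of_notMem_Icc (h : IsInnermostNewChord p q a b) {z : α}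
    (hz : z ∉ Icc a b) : sep a b z = false := by
  rw [Bool.eq_false_iff, ne_eq, sep_eq_true_iff h.lt]
  exact fun ⟨h₁, h₂⟩ => hz ⟨h₁.le, h₂⟩

theorem sep_rewire (h : IsInnermostNewChord p q a b) (hp : IsNoncrossingMatching p)
    (hq : IsNoncrossingMatching q) {y : α} (hya : y ≠ a) (hyb : y ≠ b) :
    sep a b (rewire p a b y) = sep a b y := by
  have hpa := h.sep_eq_false_of_notMem_Icc (h.apply_left_notMem_Icc hp hq)
  have hpb := h.sep_eq_false_of_notMem_Icc (h.apply_right_notMem_Icc hp hq)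
  by_cases hypa : y = p a
  · rw [hypa, rewire_apply_apply_left (hp.apply_ne b) h.lt.ne, hpa, hpb]
  by_cases hypb : y = p b
  · rw [hypb, rewire_apply_apply_right hp.involutive (hp.apply_ne b) h.lt.ne, hpa, hpb]
  rw [rewire_apply_of_ne hp.involutive hya hyb hypa hypb, h.sep_apply hp hq hyb hypb]

theorem sep_apply_rewire (h : IsInnermostNewChord p q a b) (hp : IsNoncrossingMatching p)
    (hq : IsNoncrossingMatching q) {y : α} (hypa : y ≠ p a) (hypb : y ≠ p b) :
    sep (p a) (p b) (rewire p a b y) = sep (p a) (p b) y := by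
  have hab := h.lt.ne
  have hends : sep (p a) (p b) a = sep (p a) (p b) b := by
    rw [← sep_eq_sep_comm (hp.apply_ne a).symm (h.apply_right_ne hp.involutive).symm h.apply_ne.symm
      (hp.apply_ne b).symm, h.sep_eq_false_of_notMem_Icc (h.apply_left_notMem_Icc hp hq),
      h.sep_eq_false_of_notMem_Icc (h.apply_right_notMem_Icc hp hq)]
  by_cases hya : y = a
  · rw [hya, rewire_apply_left (hp.apply_ne a) hab, hends]
  by_cases hyb : y = b
  · rw [hyb, rewire_apply_right hp.involutive (hp.apply_ne a) hab, hends]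
  -- `sep (p a) (p b)` telescopes along `p a, a, b, p b`, and `p` preserves each of the three terms
  rw [rewire_apply_of_ne hp.involutive hya hyb hypa hypb, ← sep_xor_sep (p a) b (p b),
    ← sep_xor_sep (p a) b (p b), ← sep_xor_sep (p a) a b, ← sep_xor_sep (p a) a b,
    sep_comm (p a) a, sep_comm (p a) a, hp.noncrossing a y hya hypa, h.sep_apply hp hq hyb hypb,
    hp.noncrossing b y hyb hypb]

theorem sep_rewire_of_ne (h : IsInnermostNewChord p q a b) (hp : IsNoncrossingMatching p)
    (hq : IsNoncrossingMatching q) {x y : α} (hxa : x ≠ a) (hxb : x ≠ b) (hxpa : x ≠ p a)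
    (hxpb : x ≠ p b) (hyx : y ≠ x) (hypx : y ≠ p x) :
    sep x (p x) (rewire p a b y) = sep x (p x) y := by
  have hab := h.lt.ne
  have hpx : ∀ {z}, x ≠ p z → z ≠ p x := fun hz hzx => hz (by rw [hzx, hp.involutive])
  have hA := hp.noncrossing x a hxa.symm (hpx hxpa)
  have hB := hp.noncrossing x b hxb.symm (hpx hxpb)
  have hAB : sep x (p x) a = sep x (p x) b :=
    (sep_eq_sep_comm hxa.symm (hpx hxpa) hxb.symm (hpx hxpb)).mp (h.sep_apply hp hq hxb hxpb).symm
  by_cases hya : y = a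
  · rw [hya, rewire_apply_left (hp.apply_ne a) hab, hAB]
  by_cases hyb : y = b
  · rw [hyb, rewire_apply_right hp.involutive (hp.apply_ne a) hab, hAB]
  by_cases hypa : y = p a
  · rw [hypa, rewire_apply_apply_left (hp.apply_ne b) hab, hA, hB, hAB]
  by_cases hypb : y = p b
  · rw [hypb, rewire_apply_apply_right hp.involutive (hp.apply_ne b) hab, hA, hB, hAB]
  rw [rewire_apply_of_ne hp.involutive hya hyb hypa hypb, hp.noncrossing x y hyx hypx]

theorem isNoncrossingMatching_rewire (h : IsInnermostNewChord p q a b)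
    (hp : IsNoncrossingMatching p) (hq : IsNoncrossingMatching q) :
    IsNoncrossingMatching (rewire p a b) where
  involutive := rewire_involutive hp.involutive
  apply_ne := rewire_apply_ne hp.apply_ne
  noncrossing x y hyx hyrx := by
    have hab := h.lt.ne
    by_cases hxa : x = a
    · subst hxa
      rw [rewire_apply_left (hp.apply_ne x) hab] at hyrx ⊢
      exact h.sep_rewire hp hq hyx hyrx
    by_cases hxb : x = b
    · subst hxb
      rw [rewire_apply_right hp.involutive (hp.apply_ne a) hab] at hyrx ⊢
      rw [sep_comm x a, sep_comm x a]
      exact h.sep_rewire hp hq hyrx hyx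
    by_cases hxpa : x = p a
    · subst hxpa
      rw [rewire_apply_apply_left (hp.apply_ne b) hab] at hyrx ⊢
      exact h.sep_apply_rewire hp hq hyx hyrx
    by_cases hxpb : x = p b
    · subst hxpb
      rw [rewire_apply_apply_right hp.involutive (hp.apply_ne b) hab] at hyrx ⊢
      rw [sep_comm (p b) (p a), sep_comm (p b) (p a)]
      exact h.sep_apply_rewire hp hq hyrx hyx
    rw [rewire_apply_of_ne hp.involutive hxa hxb hxpa hxpb] at hyrx ⊢
    exact h.sep_rewire_of_ne hp hq hxa hxb hxpa hxpb hyx hyrx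

theorem eqOn_rewire (h : IsInnermostNewChord p q a b) (hp : IsNoncrossingMatching p)
    (hq : IsNoncrossingMatching q) : EqOn (rewire p a b) q (Icc a b) := by
  intro z ⟨h₁, h₂⟩
  rcases h₁.eq_or_lt with rfl | h₁
  · rw [rewire_apply_left (hp.apply_ne _) h.lt.ne, h.apply_left]
  rcases h₂.eq_or_lt with rfl | h₂
  · rw [rewire_apply_right hp.involutive (hp.apply_ne a) h.lt.ne, h.apply_right hq.involutive]
  have hpa := h.apply_left_notMem_Icc hp hq
  have hpb := h.apply_right_notMem_Icc hp hq
  rw [rewire_apply_of_ne hp.involutive h₁.ne' h₂.ne (fun e => hpa (e ▸ ⟨h₁.le, h₂.le⟩))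
    (fun e => hpb (e ▸ ⟨h₁.le, h₂.le⟩)), h.eqOn ⟨h₁, h₂⟩]

theorem mapsTo_Icc (h : IsInnermostNewChord p q a b) (hq : IsNoncrossingMatching q) :
    MapsTo q (Icc a b) (Icc a b) := by
  intro z ⟨h₁, h₂⟩
  rcases h₁.eq_or_lt with rfl | h₁
  · rw [h.apply_left]; exact right_mem_Icc.mpr h.lt.le
  rcases h₂.eq_or_lt with rfl | h₂
  · rw [h.apply_right hq.involutive]; exact left_mem_Icc.mpr h.lt.le
  have := hq.noncrossing.mapsTo_Ioo hq.involutive (h.apply_left ▸ h.lt)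
  rw [h.apply_left] at this
  exact Ioo_subset_Icc_self (this ⟨h₁, h₂⟩)

theorem invariantFunctions_lt_rewire {K : Type*} [Field K] (h : IsInnermostNewChord p q a b)
    (hp : IsNoncrossingMatching p) (hq : IsNoncrossingMatching q) :
    invariantFunctions K {p, q} < invariantFunctions K {rewire p a b, q} := by
  have hmem_iff : ∀ {σ : Perm α}, Involutive σ → MapsTo σ (Icc a b) (Icc a b) →
      ∀ x, σ x ∈ Icc a b ↔ x ∈ Icc a b := fun hσ hmaps x =>
    ⟨fun hx => hσ x ▸ hmaps hx, fun hx => hmaps hx⟩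
  refine SetLike.lt_iff_le_and_exists.mpr ⟨?_, (Icc a b).indicator 1, ?_, ?_⟩
  · rintro f hf σ (rfl | rfl) x
    · have hab : f a = f b := by rw [← h.apply_left, hf q (by simp) a]
      exact apply_rewire_eq (hf p (by simp)) hab x
    · exact hf σ (by simp) x
  · rw [indicator_mem_invariantFunctions_iff]
    rintro σ (rfl | rfl)
    · exact hmem_iff (rewire_involutive hp.involutive) fun z hz =>
        (h.eqOn_rewire hp hq hz).symm ▸ h.mapsTo_Icc hq hz
    · exact hmem_iff hq.involutive (h.mapsTo_Icc hq)
  · rw [indicator_mem_invariantFunctions_iff]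
    exact fun H => h.apply_left_notMem_Icc hp hq ((H p (by simp) a).mpr ⟨le_rfl, h.lt.le⟩)

end IsInnermostNewChord

end Matching

namespace NCPair

open Equiv Perm

variable {k : ℕ}

theorem isNoncrossingMatching (p : NCPair k) : IsNoncrossingMatching p.1 :=
  ⟨p.2.1, p.2.2.1, noncrossing_of_forall_not_interleaved p.2.1 p.2.2.2⟩

theorem loops_eq_finrank (p q : NCPair k) :
    loops p q = finrank ℚ (invariantFunctions ℚ {p.1, q.1}) :=
  (finrank_invariantFunctions _).symm

theorem finrank_invariantFunctions_singleton (p : NCPair k) :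
    finrank ℚ (invariantFunctions ℚ {p.1}) = k := by
  have := card_eq_two_mul_finrank_invariantFunctions (K := ℚ) p.2.1 p.2.2.1
  rw [Fintype.card_fin] at this
  omega

theorem loops_self (p : NCPair k) : loops p p = k := by
  rw [loops_eq_finrank, pair_eq_singleton, finrank_invariantFunctions_singleton]

theorem loops_le (p q : NCPair k) : loops p q ≤ k := by
  rw [loops_eq_finrank]
  exact (Submodule.finrank_mono (invariantFunctions_anti (by simp))).trans_eq
    (finrank_invariantFunctions_singleton p)

theorem loops_lt_of_ne {p q : NCPair k} (h : p ≠ q) : loops p q < k := by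
  rw [loops_eq_finrank]
  exact (Submodule.finrank_lt_finrank_of_lt <| invariantFunctions_pair_lt p.2.1 q.2.2.1
    fun e => h (Subtype.ext e)).trans_eq (finrank_invariantFunctions_singleton p)

theorem loops_add_loops_le (p r q : NCPair k) : loops p r + loops r q ≤ k + loops p q := by
  have hsub := finrank_add_finrank_le (K := ℚ) {p.1, r.1} {r.1, q.1}
  have hunion : finrank ℚ (invariantFunctions ℚ ({p.1, r.1} ∪ {r.1, q.1})) ≤
      finrank ℚ (invariantFunctions ℚ {p.1, q.1}) :=
    Submodule.finrank_mono (invariantFunctions_anti (by rintro σ (rfl | rfl) <;> simp))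
  have hinter : finrank ℚ (invariantFunctions ℚ ({p.1, r.1} ∩ {r.1, q.1})) ≤ k :=
    (Submodule.finrank_mono (invariantFunctions_anti (by simp))).trans_eq
      (finrank_invariantFunctions_singleton r)
  rw [loops_eq_finrank, loops_eq_finrank, loops_eq_finrank]
  omega

theorem loopDist_eq_zero_iff {p q : NCPair k} : loopDist p q = 0 ↔ p = q := by
  refine ⟨fun h => ?_, fun h => by rw [h, loopDist, loops_self, Nat.sub_self]⟩
  by_contra hpq
  have := loops_lt_of_ne hpq
  unfold loopDist at h
  omega

theorem loopDist_triangle (p r q : NCPair k) : loopDist p q ≤ loopDist p r + loopDist r q := by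
  have := loops_add_loops_le p r q
  have := loops_le p r
  have := loops_le r q
  unfold loopDist
  omega

theorem exists_loopDist_eq_one {p q : NCPair k} (hpq : p ≠ q) :
    ∃ r, loopDist p r = 1 ∧ loopDist r q + 1 = loopDist p q := by
  have hp := p.isNoncrossingMatching
  have hq := q.isNoncrossingMatching
  obtain ⟨a, b, h⟩ := exists_isInnermostNewChord hp.involutive hq
    fun e => hpq (Subtype.ext (DFunLike.coe_injective e))
  have hr := h.isNoncrossingMatching_rewire hp hq
  let r : NCPair k := ⟨rewire p.1 a b, hr.involutive, hr.apply_ne,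
    fun _ _ _ _ => hr.noncrossing.not_interleaved⟩
  have hpr : p ≠ r := fun e => h.apply_ne <| by
    rw [e]; exact rewire_apply_left (hp.apply_ne a) h.lt.ne
  have hdpr : k ≤ loops p r + 1 := by
    rw [loops_eq_finrank]
    exact (finrank_invariantFunctions_singleton p).symm.trans_le
      (finrank_invariantFunctions_le_rewire (K := ℚ) p.1 a b)
  have hdrq : loops p q < loops r q := by
    rw [loops_eq_finrank, loops_eq_finrank]
    exact Submodule.finrank_lt_finrank_of_lt (h.invariantFunctions_lt_rewire hp hq)
  have := loops_lt_of_ne hpr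
  have := loops_lt_of_ne hpq
  have := loops_le r q
  have := loops_add_loops_le p r q
  refine ⟨r, ?_, ?_⟩ <;> unfold loopDist <;> omega

theorem exists_chain (p q : NCPair k) :
    ∃ P : Fin (loopDist p q + 1) → NCPair k, P 0 = p ∧ P (Fin.last _) = q ∧
      ∀ i : Fin (loopDist p q), loopDist (P i.castSucc) (P i.succ) = 1 := by
  induction hn : loopDist p q generalizing p with
  | zero => exact ⟨fun _ => q, (loopDist_eq_zero_iff.mp hn).symm, rfl, Fin.elim0⟩
  | succ n ih =>
    have hpq : p ≠ q := fun e => absurd (loopDist_eq_zero_iff.mpr e) (by omega)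
    obtain ⟨r, hpr, hrq⟩ := exists_loopDist_eq_one hpq
    obtain ⟨P, hP0, hPl, hP⟩ := ih r (by omega)
    refine ⟨Fin.cons p P, rfl, by rw [← Fin.succ_last, Fin.cons_succ, hPl], fun i => ?_⟩
    cases i using Fin.cases with
    | zero => simpa [hP0] using hpr
    | succ j => simpa [← Fin.succ_castSucc] using hP j

theorem loopDist_le_of_chain {l : ℕ} (P : Fin (l + 1) → NCPair k)
    (hP : ∀ i : Fin l, loopDist (P i.castSucc) (P i.succ) = 1) :
    loopDist (P 0) (P (Fin.last l)) ≤ l := by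
  suffices ∀ i : Fin (l + 1), loopDist (P 0) (P i) ≤ i from this (Fin.last l)
  intro i
  induction i using Fin.induction with
  | zero => simp [loopDist_eq_zero_iff]
  | succ i ih =>
    have := loopDist_triangle (P 0) (P i.castSucc) (P i.succ)
    have := hP i
    simp only [Fin.val_castSucc, Fin.val_succ] at ih ⊢
    omega

end NCPair

theorem loopDist_eq_min_chain_length_general (k : ℕ) (p q : NCPair k)
    (hpq : p ≠ q) :
    IsLeast {l : ℕ | 1 ≤ l ∧ ∃ P : Fin (l + 1) → NCPair k,
        P 0 = p ∧ P (Fin.last l) = q ∧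
        ∀ i : Fin l, loopDist (P i.castSucc) (P i.succ) = 1}
      (loopDist p q) := by
  refine ⟨⟨Nat.pos_of_ne_zero (mt NCPair.loopDist_eq_zero_iff.mp hpq), NCPair.exists_chain p q⟩, ?_⟩
  rintro l ⟨-, P, rfl, rfl, hP⟩
  exact NCPair.loopDist_le_of_chain P hP

/-- For p ≠ q, the loop distance d(p,q) is the least l ≥ 1 such that p and q can
be joined by a chain p = p₀, p₁, …, p_l = q with d(p_{i-1}, p_i) = 1 at each step. -/
theorem loopDist_eq_min_chain_length (k : ℕ) (hk : 1 ≤ k) (p q : NCPair k)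
    (hpq : p ≠ q) :
    IsLeast {l : ℕ | 1 ≤ l ∧ ∃ P : Fin (l + 1) → NCPair k,
        P 0 = p ∧ P (Fin.last l) = q ∧
        ∀ i : Fin l, loopDist (P i.castSucc) (P i.succ) = 1}
      (loopDist p q) :=
  loopDist_eq_min_chain_length_general k p q hpq
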